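/- For every δ ∈ (0,1) and R > 0 there exists a constant c > 0, depending only on γ, δ, R and h, such that for all δ-non-aligned points v₁, v₂, v₃ ∈ B(0,R), every v ∈ ℝ³, every unit vector ξ ∈ ℝ³ and every Borel probability measure μ on ℝ³: Σ_{k=1}^3 ∫_{ℝ³} ᾱ(|v−w|) |v−w|^{−2} ( b_k(v−w)·ξ )⁴ μ(dw) ≥ c · ⟨v⟩^{γ−2} · min_{k∈{1,2,3}} ∫_{ℝ³} h( (w−v_k)/δ ) μ(dw). -/

import Mathlib

/- STATEMENT 4:
For every δ ∈ (0,1) and R > 0 there is c > 0, depending only on γ, δ, R and h, such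
that for all δ-non-aligned v₁,v₂,v₃ ∈ B(0,R), every v ∈ ℝ³, every unit vector ξ and
every Borel probability measure μ on ℝ³:
  Σ_k ∫ ᾱ(|v−w|)|v−w|⁻² (b_k(v−w)·ξ)⁴ μ(dw)
    ≥ c ⟨v⟩^{γ−2} min_k ∫ h((w−v_k)/δ) μ(dw). -/

open MeasureTheory Real Set Metric
open scoped RealInnerProductSpace ENNReal

noncomputable section

def cross3 (u v : EuclideanSpace ℝ (Fin 3)) : EuclideanSpace ℝ (Fin 3) :=
  WithLp.toLp 2 ![u 1 * v 2 - u 2 * v 1, u 2 * v 0 - u 0 * v 2, u 0 * v 1 - u 1 * v 0]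

def bkv (k : Fin 3) (z : EuclideanSpace ℝ (Fin 3)) : EuclideanSpace ℝ (Fin 3) :=
  cross3 (EuclideanSpace.single k 1) z

def projPerp (u x : EuclideanSpace ℝ (Fin 3)) : EuclideanSpace ℝ (Fin 3) :=
  (Submodule.orthogonalProjectionOnto (Submodule.span ℝ {u})ᗮ x : EuclideanSpace ℝ (Fin 3))

def DeltaNonAligned (δ : ℝ) (v₁ v₂ v₃ : EuclideanSpace ℝ (Fin 3)) : Prop :=
  6 * Real.sqrt δ ≤ ‖v₂ - v₁‖ ∧
  24 * δ + 2 * Real.sqrt δ * ‖v₃ - v₁‖ ≤ ‖projPerp (v₂ - v₁) (v₃ - v₁)‖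

lemma lagrange3 (z ξ : EuclideanSpace ℝ (Fin 3)) :
    ∑ k : Fin 3, (⟪bkv k z, ξ⟫) ^ 2 = ⟪z, z⟫ * ⟪ξ, ξ⟫ - ⟪z, ξ⟫ ^ 2 := by
  simp [bkv, cross3, PiLp.inner_apply, RCLike.inner_apply, Fin.sum_univ_three,
    EuclideanSpace.single_apply, EuclideanSpace.real_norm_sq_eq]
  ring

lemma pow4_bound (t : Fin 3 → ℝ) :
    (∑ k : Fin 3, t k ^ 2) ^ 2 ≤ 3 * ∑ k : Fin 3, t k ^ 4 := by
  rw [Fin.sum_univ_three, Fin.sum_univ_three]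
  nlinarith [sq_nonneg (t 0 ^ 2 - t 1 ^ 2), sq_nonneg (t 0 ^ 2 - t 2 ^ 2),
    sq_nonneg (t 1 ^ 2 - t 2 ^ 2)]

lemma inner_cross3 (a z ξ : EuclideanSpace ℝ (Fin 3)) :
    ⟪cross3 a z, ξ⟫ = (a 1 * z 2 - a 2 * z 1) * ξ 0 + (a 2 * z 0 - a 0 * z 2) * ξ 1
      + (a 0 * z 1 - a 1 * z 0) * ξ 2 := by
  simp [cross3, PiLp.inner_apply, RCLike.inner_apply, Fin.sum_univ_three]
  ring

def Qp (ξ x : EuclideanSpace ℝ (Fin 3)) : EuclideanSpace ℝ (Fin 3) := x - ⟪x, ξ⟫ • ξ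

lemma Qp_norm_sq (ξ x : EuclideanSpace ℝ (Fin 3)) (hξ : ‖ξ‖ = 1) :
    ‖Qp ξ x‖ ^ 2 = ‖x‖ ^ 2 - ⟪x, ξ⟫ ^ 2 := by
  have hn := norm_sub_sq_real x (⟪x, ξ⟫ • ξ)
  rw [real_inner_smul_right, norm_smul, hξ] at hn
  simp only [Qp]
  rw [hn]
  rw [Real.norm_eq_abs]
  rw [mul_one, sq_abs]
  ring

lemma Qp_norm_le (ξ x : EuclideanSpace ℝ (Fin 3)) (hξ : ‖ξ‖ = 1) : ‖Qp ξ x‖ ≤ ‖x‖ := by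
  have h := Qp_norm_sq ξ x hξ
  nlinarith [norm_nonneg (Qp ξ x), norm_nonneg x, sq_nonneg (⟪x, ξ⟫)]

lemma Qp_add (ξ x y : EuclideanSpace ℝ (Fin 3)) : Qp ξ x + Qp ξ y = Qp ξ (x + y) := by
  simp only [Qp, inner_add_left, add_smul]
  abel

lemma Qp_neg (ξ x : EuclideanSpace ℝ (Fin 3)) : Qp ξ (-x) = -Qp ξ x := by
  simp only [Qp, inner_neg_left, neg_smul]
  abel

lemma norm_projPerp_le (u x : EuclideanSpace ℝ (Fin 3)) (s : ℝ) :
    ‖projPerp u x‖ ≤ ‖x - s • u‖ := by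
  set K := Submodule.span ℝ {u} with hK
  set p : EuclideanSpace ℝ (Fin 3) := (Submodule.orthogonalProjectionOnto Kᗮ x : EuclideanSpace ℝ (Fin 3)) with hp'
  have hp : p ∈ Kᗮ := SetLike.coe_mem _
  have hxp : x - p ∈ K := by
    have h2 : x - p ∈ Kᗮᗮ := Submodule.sub_starProjection_mem_orthogonal (K := Kᗮ) x
    rwa [Submodule.orthogonal_orthogonal] at h2
  have hmem : x - s • u - p ∈ K := by
    have hu : s • u ∈ K := K.smul_mem s (Submodule.mem_span_singleton_self u)
    have h3 : (x - p) - s • u ∈ K := K.sub_mem hxp hu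
    convert h3 using 1
    abel
  have hinner : ⟪p, x - s • u - p⟫ = 0 := by
    rw [real_inner_comm]
    exact (Submodule.mem_orthogonal K p).mp hp _ hmem
  have hsq : ‖x - s • u‖ ^ 2 = ‖p‖ ^ 2 + ‖x - s • u - p‖ ^ 2 := by
    calc ‖x - s • u‖ ^ 2 = ‖p + (x - s • u - p)‖ ^ 2 := by congr 1; abel
      _ = ‖p‖ ^ 2 + 2 * ⟪p, x - s • u - p⟫ + ‖x - s • u - p‖ ^ 2 := norm_add_sq_real _ _
      _ = ‖p‖ ^ 2 + ‖x - s • u - p‖ ^ 2 := by rw [hinner]; ring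
  have : ‖projPerp u x‖ = ‖p‖ := rfl
  rw [this]
  nlinarith [norm_nonneg p, norm_nonneg (x - s • u), sq_nonneg ‖x - s • u - p‖]


lemma exists_far (δ : ℝ) (hδ0 : 0 < δ) (hδ1 : δ < 1)
    (v₁ v₂ v₃ v ξ : EuclideanSpace ℝ (Fin 3)) (hξ : ‖ξ‖ = 1)
    (hna : DeltaNonAligned δ v₁ v₂ v₃) :
    2 * δ < ‖Qp ξ (v₁ - v)‖ ∨ 2 * δ < ‖Qp ξ (v₂ - v)‖ ∨ 2 * δ < ‖Qp ξ (v₃ - v)‖ := by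
  by_contra hc
  push_neg at hc
  obtain ⟨h1, h2, h3⟩ := hc
  obtain ⟨hna1, hna2⟩ := hna
  set p1 := Qp ξ (v₁ - v) with hp1
  set p2 := Qp ξ (v₂ - v) with hp2
  set p3 := Qp ξ (v₃ - v) with hp3
  set t1 := ⟪v₁ - v, ξ⟫ with ht1
  set t2 := ⟪v₂ - v, ξ⟫ with ht2
  set t3 := ⟪v₃ - v, ξ⟫ with ht3
  have hst : Real.sqrt δ * Real.sqrt δ = δ := Real.mul_self_sqrt hδ0.le
  have hs0 : 0 < Real.sqrt δ := Real.sqrt_pos.mpr hδ0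
  have hsd : δ ≤ Real.sqrt δ := by nlinarith
  have h21 : v₂ - v₁ = (t2 - t1) • ξ + (p2 - p1) := by
    simp only [hp1, hp2, Qp, sub_smul]
    abel
  have h31 : v₃ - v₁ = (t3 - t1) • ξ + (p3 - p1) := by
    simp only [hp1, hp3, Qp, sub_smul]
    abel
  have hnt : ‖(t2 - t1) • ξ‖ = |t2 - t1| := by
    rw [norm_smul, hξ, Real.norm_eq_abs, mul_one]
  have ht : 2 * Real.sqrt δ ≤ |t2 - t1| := by
    have e1 : (t2 - t1) • ξ = (v₂ - v₁) - (p2 - p1) := by rw [h21]; abel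
    have e2 : ‖v₂ - v₁‖ - ‖p2 - p1‖ ≤ ‖(v₂ - v₁) - (p2 - p1)‖ := norm_sub_norm_le _ _
    have e3 : ‖p2 - p1‖ ≤ 4 * δ := by
      have := norm_sub_le p2 p1
      linarith
    rw [← e1, hnt] at e2
    linarith
  have hden : t2 - t1 ≠ 0 := by
    intro hzero
    rw [hzero, abs_zero] at ht
    linarith
  set s := (t3 - t1) / (t2 - t1) with hsdef
  have hs : s * (t2 - t1) = t3 - t1 := div_mul_cancel₀ _ hden
  have key : (v₃ - v₁) - s • (v₂ - v₁) = (p3 - p1) - s • (p2 - p1) := by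
    rw [h31, h21, smul_add, smul_smul, hs]
    abel
  have hproj : ‖projPerp (v₂ - v₁) (v₃ - v₁)‖ ≤ ‖(p3 - p1) - s • (p2 - p1)‖ := by
    rw [← key]
    exact norm_projPerp_le _ _ _
  have ht3' : |t3 - t1| ≤ ‖v₃ - v₁‖ := by
    have e : t3 - t1 = ⟪v₃ - v₁, ξ⟫ := by rw [ht3, ht1, ← inner_sub_left]; congr 1; abel
    rw [e]
    calc |⟪v₃ - v₁, ξ⟫| ≤ ‖v₃ - v₁‖ * ‖ξ‖ := abs_real_inner_le_norm _ _
      _ = ‖v₃ - v₁‖ := by rw [hξ, mul_one]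
  have habs : |s| * |t2 - t1| = |t3 - t1| := by rw [← abs_mul, hs]
  have habs2 : |s| * (2 * Real.sqrt δ) ≤ ‖v₃ - v₁‖ := by
    calc |s| * (2 * Real.sqrt δ) ≤ |s| * |t2 - t1| :=
          mul_le_mul_of_nonneg_left ht (abs_nonneg s)
      _ = |t3 - t1| := habs
      _ ≤ ‖v₃ - v₁‖ := ht3'
  have hb : ‖(p3 - p1) - s • (p2 - p1)‖ ≤ 4 * δ + |s| * (4 * δ) := by
    calc ‖(p3 - p1) - s • (p2 - p1)‖ ≤ ‖p3 - p1‖ + ‖s • (p2 - p1)‖ := norm_sub_le _ _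
      _ = ‖p3 - p1‖ + |s| * ‖p2 - p1‖ := by rw [norm_smul, Real.norm_eq_abs]
      _ ≤ 4 * δ + |s| * (4 * δ) := by
          have e3 : ‖p2 - p1‖ ≤ 4 * δ := by
            have := norm_sub_le p2 p1; linarith
          have e4 : ‖p3 - p1‖ ≤ 4 * δ := by
            have := norm_sub_le p3 p1; linarith
          have := mul_le_mul_of_nonneg_left e3 (abs_nonneg s)
          linarith
  have h5 : 2 * δ * |s| ≤ Real.sqrt δ * ‖v₃ - v₁‖ := by
    have h6 := mul_le_mul_of_nonneg_left habs2 hs0.le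
    calc 2 * δ * |s| = Real.sqrt δ * (|s| * (2 * Real.sqrt δ)) := by
          linear_combination (2 * |s|) * hst.symm
      _ ≤ Real.sqrt δ * ‖v₃ - v₁‖ := h6
  have hfin : 24 * δ + 2 * Real.sqrt δ * ‖v₃ - v₁‖ ≤ 4 * δ + |s| * (4 * δ) :=
    le_trans hna2 (le_trans hproj hb)
  linarith [hfin, h5]




lemma cont_inner_bkv (k : Fin 3) (v ξ : EuclideanSpace ℝ (Fin 3)) :
    Continuous fun w : EuclideanSpace ℝ (Fin 3) => (⟪bkv k (v - w), ξ⟫ : ℝ) := by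
  have hproj : ∀ i : Fin 3, Continuous fun w : EuclideanSpace ℝ (Fin 3) => (v - w) i :=
    fun i => (EuclideanSpace.proj i).continuous.comp (continuous_const.sub continuous_id)
  have he : (fun w : EuclideanSpace ℝ (Fin 3) => (⟪bkv k (v - w), ξ⟫ : ℝ)) =
      fun w => ((EuclideanSpace.single k (1:ℝ)) 1 * (v - w) 2
          - (EuclideanSpace.single k (1:ℝ)) 2 * (v - w) 1) * ξ 0
        + ((EuclideanSpace.single k (1:ℝ)) 2 * (v - w) 0
          - (EuclideanSpace.single k (1:ℝ)) 0 * (v - w) 2) * ξ 1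
        + ((EuclideanSpace.single k (1:ℝ)) 0 * (v - w) 1
          - (EuclideanSpace.single k (1:ℝ)) 1 * (v - w) 0) * ξ 2 :=
    funext fun w => inner_cross3 _ _ _
  rw [he]
  exact ((((continuous_const.mul (hproj 2)).sub (continuous_const.mul (hproj 1))).mul
      continuous_const).add
    (((continuous_const.mul (hproj 0)).sub (continuous_const.mul (hproj 2))).mul
      continuous_const)).add
    (((continuous_const.mul (hproj 1)).sub (continuous_const.mul (hproj 0))).mul
      continuous_const)

lemma meas_f (χ : ℝ → ℝ) (hχc : ContinuousOn χ (Set.Ici 0))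
    (hχ_pos : ∀ r ≥ (0:ℝ), 0 < χ r) (γ : ℝ) (v ξ : EuclideanSpace ℝ (Fin 3)) (k : Fin 3) :
    Measurable fun w : EuclideanSpace ℝ (Fin 3) =>
      ENNReal.ofReal ((χ ‖v - w‖) ^ γ * (‖v - w‖ ^ 2)⁻¹ * (⟪bkv k (v - w), ξ⟫) ^ 4) := by
  have c0 : Continuous fun w : EuclideanSpace ℝ (Fin 3) => ‖v - w‖ :=
    (continuous_const.sub continuous_id).norm
  have c1 : Continuous fun w : EuclideanSpace ℝ (Fin 3) => χ ‖v - w‖ :=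
    hχc.comp_continuous c0 fun w => Set.mem_Ici.mpr (norm_nonneg _)
  have c2 : Continuous fun w : EuclideanSpace ℝ (Fin 3) => (χ ‖v - w‖) ^ γ :=
    c1.rpow_const fun w => Or.inl (hχ_pos _ (norm_nonneg _)).ne'
  have m3 : Measurable fun w : EuclideanSpace ℝ (Fin 3) => (‖v - w‖ ^ 2)⁻¹ :=
    ((c0.pow 2).measurable).inv
  have c4 : Continuous fun w : EuclideanSpace ℝ (Fin 3) => (⟪bkv k (v - w), ξ⟫ : ℝ) ^ 4 :=
    (cont_inner_bkv k v ξ).pow 4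
  exact ENNReal.measurable_ofReal.comp ((c2.measurable.mul m3).mul c4.measurable)


lemma core_ineq (γ : ℝ) (hγ2 : γ ≤ -2)
    (χ : ℝ → ℝ) (hχ_mono : MonotoneOn χ (Set.Ici 0)) (hχ_pos : ∀ r ≥ (0:ℝ), 0 < χ r)
    (hχ_large : ∀ r ≥ (1:ℝ), χ r = r)
    (δ R : ℝ) (hδ0 : 0 < δ) (hδ1 : δ < 1) (hR : 0 < R)
    (v v' w ξ : EuclideanSpace ℝ (Fin 3)) (hξ : ‖ξ‖ = 1) (hv' : ‖v'‖ < R)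
    (hw : ‖w - v'‖ ≤ 3/2 * δ) (hfar : 2 * δ < ‖Qp ξ (v' - v)‖) :
    (R+3) ^ (γ-2) * Real.sqrt (1 + ‖v‖^2) ^ (γ-2) * (δ^4/48)
      ≤ ∑ k : Fin 3, (χ ‖v - w‖) ^ γ * (‖v - w‖ ^ 2)⁻¹ * (⟪bkv k (v - w), ξ⟫) ^ 4 := by
  set N := Real.sqrt (1 + ‖v‖ ^ 2) with hN
  have hNsq : N ^ 2 = 1 + ‖v‖ ^ 2 := Real.sq_sqrt (by positivity)
  have hN0 : 0 ≤ N := Real.sqrt_nonneg _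
  have hN1 : 1 ≤ N := by nlinarith [sq_nonneg ‖v‖]
  have hvN : ‖v‖ ≤ N := by nlinarith [norm_nonneg v]
  set z := v - w with hz
  have hQsplit : Qp ξ (v' - w) + Qp ξ (w - v) = Qp ξ (v' - v) := by
    rw [Qp_add]; congr 1; abel
  have hQbound : ‖Qp ξ (v' - v)‖ ≤ ‖Qp ξ (v' - w)‖ + ‖Qp ξ (w - v)‖ := by
    rw [← hQsplit]; exact norm_add_le _ _
  have hQwv : ‖Qp ξ (w - v)‖ = ‖Qp ξ z‖ := by
    rw [show w - v = -z by rw [hz]; abel, Qp_neg, norm_neg]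
  have hQvw' : ‖Qp ξ (v' - w)‖ ≤ 3/2 * δ := by
    refine le_trans (Qp_norm_le ξ _ hξ) ?_
    rw [norm_sub_rev]; exact hw
  have hQz : δ/2 < ‖Qp ξ z‖ := by
    rw [hQwv] at hQbound; linarith
  have hzpos : δ/2 < ‖z‖ := lt_of_lt_of_le hQz (Qp_norm_le ξ z hξ)
  have hznz : 0 < ‖z‖ := by linarith
  have hq : δ^2/4 ≤ ‖z‖^2 - ⟪z, ξ⟫^2 := by
    have hqs := Qp_norm_sq ξ z hξ
    nlinarith [norm_nonneg (Qp ξ z)]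
  have hsum2 : ∑ k : Fin 3, (⟪bkv k z, ξ⟫) ^ 2 = ‖z‖^2 - ⟪z, ξ⟫^2 := by
    rw [lagrange3, real_inner_self_eq_norm_sq, real_inner_self_eq_norm_sq, hξ]
    ring
  have hsum4 : δ^4/48 ≤ ∑ k : Fin 3, (⟪bkv k z, ξ⟫) ^ 4 := by
    have h4 := pow4_bound (fun k => ⟪bkv k z, ξ⟫)
    rw [hsum2] at h4
    have hqsq : (δ^2/4)^2 ≤ (‖z‖^2 - ⟪z, ξ⟫^2)^2 := pow_le_pow_left₀ (by positivity) hq 2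
    nlinarith
  have hwnorm : ‖w‖ ≤ R + 3/2 := by
    have hth := norm_add_le (w - v') v'
    rw [sub_add_cancel] at hth
    linarith
  have hzK : ‖z‖ ≤ (R+3) * N := by
    have h1 : ‖z‖ ≤ ‖v‖ + ‖w‖ := norm_sub_le v w
    have h2 : (R+2) * 1 ≤ (R+2) * N := mul_le_mul_of_nonneg_left hN1 (by linarith)
    linarith [h1, h2, hvN, hwnorm]
  set K := (R+3) * N with hK
  have hKpos : 0 < K := mul_pos (by linarith) (by linarith)
  have hχK : χ ‖z‖ ≤ K := by
    rcases le_or_gt ‖z‖ 1 with hle | hgt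
    · have hmono := hχ_mono (Set.mem_Ici.mpr (norm_nonneg z)) (Set.mem_Ici.mpr zero_le_one) hle
      rw [hχ_large 1 le_rfl] at hmono
      have h3 : (R+3) * 1 ≤ (R+3) * N := mul_le_mul_of_nonneg_left hN1 (by linarith)
      rw [hK]; linarith
    · rw [hχ_large _ hgt.le]; exact hzK
  have hA : K ^ γ ≤ (χ ‖z‖) ^ γ :=
    Real.rpow_le_rpow_of_nonpos (hχ_pos _ (norm_nonneg z)) hχK (by linarith)
  have hB : (K^2)⁻¹ ≤ (‖z‖^2)⁻¹ :=
    inv_anti₀ (pow_pos hznz 2) (pow_le_pow_left₀ (norm_nonneg z) hzK 2)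
  have hsplit : K ^ (γ-2) = K ^ γ * (K^2)⁻¹ := by
    rw [show γ - 2 = γ + (-2) by ring, Real.rpow_add hKpos, Real.rpow_neg hKpos.le,
      show ((2:ℝ)) = ((2:ℕ):ℝ) by norm_num, Real.rpow_natCast]
  have hmul : ((R+3):ℝ) ^ (γ-2) * N ^ (γ-2) = K ^ (γ-2) :=
    (Real.mul_rpow (by linarith) hN0).symm
  have hfac : ∑ k : Fin 3, (χ ‖z‖) ^ γ * (‖z‖ ^ 2)⁻¹ * (⟪bkv k z, ξ⟫) ^ 4
      = ((χ ‖z‖) ^ γ * (‖z‖ ^ 2)⁻¹) * ∑ k : Fin 3, (⟪bkv k z, ξ⟫) ^ 4 := by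
    rw [Finset.mul_sum]
  have hAnn : 0 ≤ (χ ‖z‖) ^ γ := Real.rpow_nonneg (hχ_pos _ (norm_nonneg z)).le γ
  calc (R+3) ^ (γ-2) * N ^ (γ-2) * (δ^4/48) = K ^ γ * (K^2)⁻¹ * (δ^4/48) := by
        rw [hmul, hsplit]
    _ ≤ ((χ ‖z‖) ^ γ * (‖z‖ ^ 2)⁻¹) * ∑ k : Fin 3, (⟪bkv k z, ξ⟫) ^ 4 := by
        apply mul_le_mul (mul_le_mul hA hB (by positivity) hAnn) hsum4 (by positivity)
        exact mul_nonneg hAnn (by positivity)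
    _ = ∑ k : Fin 3, (χ ‖z‖) ^ γ * (‖z‖ ^ 2)⁻¹ * (⟪bkv k z, ξ⟫) ^ 4 := hfac.symm


theorem stmt4 (γ : ℝ) (hγ : γ ∈ Set.Icc (-3 : ℝ) (-2))
    -- the cut-off profile χ (defining ᾱ(r) = χ(r)^γ)
    (χ : ℝ → ℝ)
    (hχ_smooth : ContDiffOn ℝ (⊤ : ℕ∞) χ (Set.Ici 0))
    (hχ_mono : MonotoneOn χ (Set.Ici 0))
    (hχ_pos : ∀ r ≥ (0:ℝ), 0 < χ r)
    (hχ_small : ∀ r ∈ Set.Icc (0:ℝ) (1/2), χ r = 0.99)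
    (hχ_large : ∀ r ≥ (1:ℝ), χ r = r)
    (hχ_lip : LipschitzOnWith 1 χ (Set.Ici 0))
    (hχ_ge : ∀ r ≥ (0:ℝ), r ≤ χ r)
    -- the bump function h
    (h : EuclideanSpace ℝ (Fin 3) → ℝ)
    (hh_smooth : ContDiff ℝ (⊤ : ℕ∞) h)
    (hh_range : ∀ x, h x ∈ Set.Icc (0:ℝ) 1)
    (hh_one : ∀ x ∈ Metric.ball (0 : EuclideanSpace ℝ (Fin 3)) 1, h x = 1)
    (hh_zero : ∀ x ∉ Metric.ball (0 : EuclideanSpace ℝ (Fin 3)) (3/2), h x = 0)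
    (δ R : ℝ) (hδ : δ ∈ Set.Ioo (0:ℝ) 1) (hR : 0 < R) :
    ∃ c > (0:ℝ),
      ∀ (v₁ v₂ v₃ : EuclideanSpace ℝ (Fin 3)),
        v₁ ∈ Metric.ball (0 : EuclideanSpace ℝ (Fin 3)) R →
        v₂ ∈ Metric.ball (0 : EuclideanSpace ℝ (Fin 3)) R →
        v₃ ∈ Metric.ball (0 : EuclideanSpace ℝ (Fin 3)) R →
        DeltaNonAligned δ v₁ v₂ v₃ →
        ∀ (v ξ : EuclideanSpace ℝ (Fin 3)), ‖ξ‖ = 1 →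
        ∀ (μ : Measure (EuclideanSpace ℝ (Fin 3))), IsProbabilityMeasure μ →
          ENNReal.ofReal (c * Real.sqrt (1 + ‖v‖ ^ 2) ^ (γ - 2)) *
            min (∫⁻ w, ENNReal.ofReal (h (δ⁻¹ • (w - v₁))) ∂μ)
              (min (∫⁻ w, ENNReal.ofReal (h (δ⁻¹ • (w - v₂))) ∂μ)
                   (∫⁻ w, ENNReal.ofReal (h (δ⁻¹ • (w - v₃))) ∂μ))
          ≤ ∑ k : Fin 3, ∫⁻ w,
              ENNReal.ofReal ((χ ‖v - w‖) ^ γ * (‖v - w‖ ^ 2)⁻¹ *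
                (⟪bkv k (v - w), ξ⟫) ^ 4) ∂μ := by
  obtain ⟨hδ0, hδ1⟩ := hδ
  refine ⟨(R+3) ^ (γ-2) * (δ^4/48), mul_pos (Real.rpow_pos_of_pos (by linarith) _) (by positivity), ?_⟩
  intro v₁ v₂ v₃ hb1 hb2 hb3 hna v ξ hξ μ hμ
  have main : ∀ v' : EuclideanSpace ℝ (Fin 3), ‖v'‖ < R → 2 * δ < ‖Qp ξ (v' - v)‖ →
      ENNReal.ofReal ((R+3) ^ (γ-2) * (δ^4/48) * Real.sqrt (1 + ‖v‖ ^ 2) ^ (γ-2)) *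
        (∫⁻ w, ENNReal.ofReal (h (δ⁻¹ • (w - v'))) ∂μ)
      ≤ ∑ k : Fin 3, ∫⁻ w,
          ENNReal.ofReal ((χ ‖v - w‖) ^ γ * (‖v - w‖ ^ 2)⁻¹ *
            (⟪bkv k (v - w), ξ⟫) ^ 4) ∂μ := by
    intro v' hv' hfar
    have hmeas : ∀ k : Fin 3, Measurable fun w : EuclideanSpace ℝ (Fin 3) =>
        ENNReal.ofReal ((χ ‖v - w‖) ^ γ * (‖v - w‖ ^ 2)⁻¹ * (⟪bkv k (v - w), ξ⟫) ^ 4) :=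
      fun k => meas_f χ hχ_smooth.continuousOn hχ_pos γ v ξ k
    have hpt : ∀ w : EuclideanSpace ℝ (Fin 3),
        ENNReal.ofReal ((R+3) ^ (γ-2) * (δ^4/48) * Real.sqrt (1 + ‖v‖ ^ 2) ^ (γ-2)) *
          ENNReal.ofReal (h (δ⁻¹ • (w - v')))
        ≤ ∑ k : Fin 3,
            ENNReal.ofReal ((χ ‖v - w‖) ^ γ * (‖v - w‖ ^ 2)⁻¹ * (⟪bkv k (v - w), ξ⟫) ^ 4) := by
      intro w
      by_cases hwmem : δ⁻¹ • (w - v') ∈ Metric.ball (0 : EuclideanSpace ℝ (Fin 3)) (3/2)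
      · have hwd : ‖w - v'‖ ≤ 3/2 * δ := by
          rw [mem_ball_zero_iff, norm_smul, Real.norm_eq_abs,
            abs_of_pos (inv_pos.mpr hδ0)] at hwmem
          calc ‖w - v'‖ = δ * (δ⁻¹ * ‖w - v'‖) := by field_simp
            _ ≤ δ * (3/2) := mul_le_mul_of_nonneg_left hwmem.le hδ0.le
            _ = 3/2 * δ := by ring
        have hcore := core_ineq γ hγ.2 χ hχ_mono hχ_pos hχ_large δ R hδ0 hδ1 hR
          v v' w ξ hξ hv' hwd hfar
        calc ENNReal.ofReal ((R+3) ^ (γ-2) * (δ^4/48) * Real.sqrt (1 + ‖v‖ ^ 2) ^ (γ-2)) *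
              ENNReal.ofReal (h (δ⁻¹ • (w - v')))
            ≤ ENNReal.ofReal ((R+3) ^ (γ-2) * (δ^4/48) * Real.sqrt (1 + ‖v‖ ^ 2) ^ (γ-2)) * 1 :=
              mul_le_mul_right (ENNReal.ofReal_le_one.mpr (hh_range _).2) _
          _ = ENNReal.ofReal ((R+3) ^ (γ-2) * (δ^4/48) * Real.sqrt (1 + ‖v‖ ^ 2) ^ (γ-2)) :=
              mul_one _
          _ ≤ ENNReal.ofReal (∑ k : Fin 3,
                (χ ‖v - w‖) ^ γ * (‖v - w‖ ^ 2)⁻¹ * (⟪bkv k (v - w), ξ⟫) ^ 4) := by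
              refine ENNReal.ofReal_le_ofReal ?_
              calc (R+3) ^ (γ-2) * (δ^4/48) * Real.sqrt (1 + ‖v‖ ^ 2) ^ (γ-2)
                  = (R+3) ^ (γ-2) * Real.sqrt (1 + ‖v‖ ^ 2) ^ (γ-2) * (δ^4/48) := by ring
                _ ≤ _ := hcore
          _ = ∑ k : Fin 3, ENNReal.ofReal
                ((χ ‖v - w‖) ^ γ * (‖v - w‖ ^ 2)⁻¹ * (⟪bkv k (v - w), ξ⟫) ^ 4) := by
              refine ENNReal.ofReal_sum_of_nonneg fun k _ => ?_
              exact mul_nonneg (mul_nonneg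
                (Real.rpow_nonneg (hχ_pos _ (norm_nonneg _)).le _) (by positivity))
                (by positivity)
      · rw [hh_zero _ hwmem]
        simp
    calc ENNReal.ofReal ((R+3) ^ (γ-2) * (δ^4/48) * Real.sqrt (1 + ‖v‖ ^ 2) ^ (γ-2)) *
          (∫⁻ w, ENNReal.ofReal (h (δ⁻¹ • (w - v'))) ∂μ)
        = ∫⁻ w, ENNReal.ofReal ((R+3) ^ (γ-2) * (δ^4/48) * Real.sqrt (1 + ‖v‖ ^ 2) ^ (γ-2)) *
            ENNReal.ofReal (h (δ⁻¹ • (w - v'))) ∂μ :=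
          (lintegral_const_mul' _ _ ENNReal.ofReal_ne_top).symm
      _ ≤ ∫⁻ w, ∑ k : Fin 3, ENNReal.ofReal
            ((χ ‖v - w‖) ^ γ * (‖v - w‖ ^ 2)⁻¹ * (⟪bkv k (v - w), ξ⟫) ^ 4) ∂μ :=
          lintegral_mono hpt
      _ = ∑ k : Fin 3, ∫⁻ w, ENNReal.ofReal
            ((χ ‖v - w‖) ^ γ * (‖v - w‖ ^ 2)⁻¹ * (⟪bkv k (v - w), ξ⟫) ^ 4) ∂μ :=
          lintegral_finset_sum _ fun k _ => hmeas k
  rcases exists_far δ hδ0 hδ1 v₁ v₂ v₃ v ξ hξ hna with hf | hf | hf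
  · exact le_trans (mul_le_mul_right (min_le_left _ _) _)
      (main v₁ (mem_ball_zero_iff.mp hb1) hf)
  · exact le_trans (mul_le_mul_right ((min_le_right _ _).trans (min_le_left _ _)) _)
      (main v₂ (mem_ball_zero_iff.mp hb2) hf)
  · exact le_trans (mul_le_mul_right ((min_le_right _ _).trans (min_le_right _ _)) _)
      (main v₃ (mem_ball_zero_iff.mp hb3) hf)

end
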